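/- Let X and Y be finite sets, and let p be a joint probability distribution on X × Y. Define the conditional entropy variance V(X|Y) = Σ_{x,y} p(x,y)(−log(p(x,y)/p_Y(y)) − H(X|Y))², where H(X|Y) = −Σ_{x,y} p(x,y) log(p(x,y)/p_Y(y)) and p_Y is the marginal on Y. Then V(X|Y) ≤ log²(2|X| + 1). -/

import Mathlib

open Finset Real

/-!
With `L = -log p(x|y)` one has `V = E[L²] - H² ≤ E[L²]`, so it suffices to bound
`∑ₓ q log² q` for each conditional distribution `q` on `X`. On the support of `q`,
`log² q = log² (1/q) ≤ log² (1/q + |X| + 1)`, and the shifted points lie in `[e, ∞)`, where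
`log²` is concave. Jensen's inequality then bounds the sum by
`log² (|supp q| + |X| + 1) ≤ log² (2|X| + 1)`.
-/

theorem concaveOn_log_sq : ConcaveOn ℝ (Set.Ici (exp 1)) (fun s => log s ^ 2) := by
  have hne : ∀ s ∈ Set.Ici (exp 1), s ≠ 0 := fun s hs => ((exp_pos 1).trans_le hs).ne'
  have hne' : ∀ s ∈ Set.Ioi (exp 1), s ≠ 0 := fun s hs => hne s (Set.Ioi_subset_Ici_self hs)
  have hderiv : ∀ s ∈ Set.Ioi (exp 1), deriv (fun s => log s ^ 2) s = 2 * (log s / s) := by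
    intro s hs
    rw [((hasDerivAt_log (hne' s hs)).fun_pow 2).deriv]
    field_simp
    ring
  refine AntitoneOn.concaveOn_of_deriv (convex_Ici _)
    (fun s hs => ((continuousAt_log (hne s hs)).pow 2).continuousWithinAt) ?_ ?_ <;>
    rw [interior_Ici]
  · exact fun s hs => ((differentiableAt_log (hne' s hs)).pow 2).differentiableWithinAt
  · intro a ha b hb hab
    rw [hderiv a ha, hderiv b hb]
    have := log_div_self_antitoneOn (Set.Ioi_subset_Ici_self ha) (Set.Ioi_subset_Ici_self hb) hab
    linarith

theorem sum_mul_log_sq_le {ι : Type*} [Fintype ι] (q : ι → ℝ) (hq0 : ∀ i, 0 ≤ q i)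
    (hq1 : ∑ i, q i = 1) :
    ∑ i, q i * log (q i) ^ 2 ≤ log (2 * Fintype.card ι + 1) ^ 2 := by
  set N : ℝ := (Fintype.card ι : ℝ)
  set t := univ.filter (fun i => 0 < q i)
  have hsupp : ∀ i, q i ≠ 0 → 0 < q i := fun i hi => (hq0 i).lt_of_ne' hi
  have ht1 : ∑ i ∈ t, q i = 1 := by
    rw [sum_filter_of_ne fun i _ hi => hsupp i hi, hq1]
  have hN : 1 ≤ N := by
    obtain ⟨i, -⟩ := Finset.nonempty_of_sum_ne_zero (ht1.trans_ne one_ne_zero)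
    exact Nat.one_le_cast.2 (Fintype.card_pos_iff.2 ⟨i⟩)
  set s : ι → ℝ := fun i => (q i)⁻¹ + (N + 1)
  have hs : ∀ i ∈ t, 0 ≤ log (q i)⁻¹ ∧ 3 ≤ s i := by
    intro i hi
    have hqi := (mem_filter.1 hi).2
    have hq_le : q i ≤ 1 := hq1 ▸ single_le_sum (fun j _ => hq0 j) (mem_univ i)
    have : 1 ≤ (q i)⁻¹ := one_le_inv₀ hqi |>.2 hq_le
    exact ⟨log_nonneg this, by simp only [s]; linarith⟩
  have hmean : ∑ i ∈ t, q i • s i = #t + (N + 1) := by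
    simp only [s, smul_eq_mul, mul_add, sum_add_distrib, ← sum_mul, ht1, one_mul]
    rw [sum_congr rfl fun i hi => mul_inv_cancel₀ (mem_filter.1 hi).2.ne', sum_const,
      nsmul_one]
  calc ∑ i, q i * log (q i) ^ 2 = ∑ i ∈ t, q i • log (q i)⁻¹ ^ 2 := by
        rw [← sum_filter_of_ne fun i _ hi => hsupp i (left_ne_zero_of_mul hi)]
        simp only [t, log_inv, neg_sq, smul_eq_mul]
    _ ≤ ∑ i ∈ t, q i • log (s i) ^ 2 := by
        refine sum_le_sum fun i hi => smul_le_smul_of_nonneg_left ?_ (hq0 i)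
        have hqi := (mem_filter.1 hi).2
        exact pow_le_pow_left₀ (hs i hi).1
          (log_le_log (inv_pos.2 hqi) (by simp only [s]; linarith)) 2
    _ ≤ log (∑ i ∈ t, q i • s i) ^ 2 :=
        concaveOn_log_sq.le_map_sum (fun i _ => hq0 i) ht1
          fun i hi => Set.mem_Ici.2 (exp_one_lt_d9.le.trans (by linarith [(hs i hi).2]))
    _ ≤ log (2 * N + 1) ^ 2 := by
        have hcard : (#t : ℝ) ≤ N := Nat.cast_le.2 (card_le_univ t)
        rw [hmean]
        exact pow_le_pow_left₀ (log_nonneg (by linarith [(#t).cast_nonneg (α := ℝ)]))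
          (log_le_log (by positivity) (by linarith)) 2

theorem sum_mul_logb_sq_le {ι : Type*} [Fintype ι] (b : ℝ) (q : ι → ℝ) (hq0 : ∀ i, 0 ≤ q i)
    (hq1 : ∑ i, q i = 1) :
    ∑ i, q i * logb b (q i) ^ 2 ≤ logb b (2 * Fintype.card ι + 1) ^ 2 := by
  simp only [logb, div_pow, ← mul_div_assoc, ← sum_div]
  exact div_le_div_of_nonneg_right (sum_mul_log_sq_le q hq0 hq1) (sq_nonneg _)

theorem sum_mul_logb_div_sum_sq_le {ι : Type*} [Fintype ι] (b : ℝ) (r : ι → ℝ)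
    (hr : ∀ i, 0 ≤ r i) :
    ∑ i, r i * logb b (r i / ∑ j, r j) ^ 2
      ≤ (∑ j, r j) * logb b (2 * Fintype.card ι + 1) ^ 2 := by
  set S := ∑ j, r j
  rcases (sum_nonneg fun j _ => hr j : 0 ≤ S).eq_or_lt with hS | hS
  · have hr0 : ∀ i, r i = 0 := fun i =>
      (sum_eq_zero_iff_of_nonneg fun j _ => hr j).1 hS.symm i (mem_univ i)
    simp [hr0, S]
  · have hS0 : S ≠ 0 := hS.ne'
    have hq1 : ∑ i, r i / S = 1 := by rw [← sum_div, div_self hS0]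
    calc ∑ i, r i * logb b (r i / S) ^ 2 = S * ∑ i, r i / S * logb b (r i / S) ^ 2 := by
          simp only [mul_sum, ← mul_assoc, mul_div_cancel₀ _ hS0]
      _ ≤ S * logb b (2 * Fintype.card ι + 1) ^ 2 :=
          mul_le_mul_of_nonneg_left
            (sum_mul_logb_sq_le b _ (fun i => div_nonneg (hr i) hS.le) hq1) hS.le

theorem sum_mul_logb_cond_sq_le {X Y : Type*} [Fintype X] [Fintype Y] (b : ℝ) (p : X × Y → ℝ)
    (h0 : ∀ z, 0 ≤ p z) (h1 : ∑ z, p z = 1) :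
    ∑ z : X × Y, p z * logb b (p z / ∑ a, p (a, z.2)) ^ 2
      ≤ logb b (2 * Fintype.card X + 1) ^ 2 := by
  calc ∑ z : X × Y, p z * logb b (p z / ∑ a, p (a, z.2)) ^ 2
        = ∑ y, ∑ x, p (x, y) * logb b (p (x, y) / ∑ a, p (a, y)) ^ 2 :=
        Fintype.sum_prod_type_right _
    _ ≤ ∑ y, (∑ a, p (a, y)) * logb b (2 * Fintype.card X + 1) ^ 2 :=
        sum_le_sum fun y _ => sum_mul_logb_div_sum_sq_le b (fun x => p (x, y)) fun x => h0 _
    _ = logb b (2 * Fintype.card X + 1) ^ 2 := by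
        rw [← sum_mul, ← Fintype.sum_prod_type_right, h1, one_mul]

theorem sum_mul_sub_sum_sq {ι : Type*} (s : Finset ι) (w a : ι → ℝ) (hw : ∑ i ∈ s, w i = 1) :
    ∑ i ∈ s, w i * (a i - ∑ j ∈ s, w j * a j) ^ 2
      = ∑ i ∈ s, w i * a i ^ 2 - (∑ i ∈ s, w i * a i) ^ 2 := by
  set m := ∑ j ∈ s, w j * a j
  calc ∑ i ∈ s, w i * (a i - m) ^ 2
        = ∑ i ∈ s, w i * a i ^ 2 - 2 * m * ∑ i ∈ s, w i * a i + m ^ 2 * ∑ i ∈ s, w i := by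
        simp only [mul_sum, ← sum_sub_distrib, ← sum_add_distrib]
        exact sum_congr rfl fun i _ => by ring
    _ = ∑ i ∈ s, w i * a i ^ 2 - m ^ 2 := by rw [hw]; ring

/-- The conditional entropy variance is bounded by log²(2|X|+1). -/
theorem stmt1 {X Y : Type*} [Fintype X] [Fintype Y] (p : X × Y → ℝ)
    (h0 : ∀ z, 0 ≤ p z) (h1 : ∑ z, p z = 1)
    (H V : ℝ)
    (hH : H = -∑ z : X × Y, p z * Real.logb 2 (p z / (∑ a, p (a, z.2))))
    (hV : V = ∑ z : X × Y, p z * (-Real.logb 2 (p z / (∑ a, p (a, z.2))) - H)^2) :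
    V ≤ (Real.logb 2 (2 * (Fintype.card X : ℝ) + 1))^2 := by
  have hH' : H = ∑ z : X × Y, p z * -logb 2 (p z / ∑ a, p (a, z.2)) := by
    simp only [hH, mul_neg, sum_neg_distrib]
  rw [hV, hH', sum_mul_sub_sum_sq _ _ _ h1]
  simp only [neg_sq]
  linarith [sum_mul_logb_cond_sq_le 2 p h0 h1,
    sq_nonneg (∑ z : X × Y, p z * -logb 2 (p z / ∑ a, p (a, z.2)))]
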